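/- Let ρ and σ be d×d density matrices with σ positive definite with smallest eigenvalue β = λ_min(σ), suppose the support of ρ is contained in the support of σ, and let T = ‖ρ − σ‖₁/2. If T ≥ β, then S(ρ‖σ) ≤ (β + T)·log(1 + T/β). -/

import Mathlib

open Matrix MeasureTheory
open scoped ComplexOrder

/-- Matrix logarithm on the support: apply `Real.log` (which is `0` at `0`) to the
eigenvalues of a Hermitian matrix via functional calculus; junk value `0` otherwise. -/
noncomputable def mlog {n : Type*} [Fintype n] [DecidableEq n] (A : Matrix n n ℂ) :
    Matrix n n ℂ :=
  if hA : A.IsHermitian then hA.cfc Real.log else 0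

/-- Quantum relative entropy `S(A‖B) = Tr A (log A - log B)`. -/
noncomputable def qRelEnt {n : Type*} [Fintype n] [DecidableEq n] (A B : Matrix n n ℂ) : ℝ :=
  ((A * (mlog A - mlog B)).trace).re

/-- The square root of a positive semidefinite matrix, as defined in the older Mathlib
(`Matrix.PosSemidef.sqrt`, since removed). -/
noncomputable def Matrix.PosSemidef.sqrt {n : Type*} [Fintype n] [DecidableEq n]
    {A : Matrix n n ℂ} (hA : A.PosSemidef) : Matrix n n ℂ :=
  hA.1.eigenvectorUnitary.1 * diagonal ((↑) ∘ (√·) ∘ hA.1.eigenvalues) *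
  (star hA.1.eigenvectorUnitary : Matrix n n ℂ)

theorem Matrix.PosSemidef.posSemidef_sqrt {n : Type*} [Fintype n] [DecidableEq n]
    {A : Matrix n n ℂ} (hA : A.PosSemidef) : PosSemidef hA.sqrt := by
  apply PosSemidef.mul_mul_conjTranspose_same
  refine posSemidef_diagonal_iff.mpr fun i ↦ ?_
  simp only [Function.comp_apply]
  exact_mod_cast Real.sqrt_nonneg _

/-- Trace norm `‖X‖₁ = Tr √(Xᴴ X)`. -/
noncomputable def traceNorm {n : Type*} [Fintype n] [DecidableEq n] (X : Matrix n n ℂ) : ℝ :=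
  ((Matrix.posSemidef_conjTranspose_mul_self X).sqrt.trace).re

/-- Smallest eigenvalue of a Hermitian matrix (junk value `0` otherwise). -/
noncomputable def lamMin {n : Type*} [Fintype n] [DecidableEq n] (A : Matrix n n ℂ) : ℝ :=
  if hA : A.IsHermitian then ⨅ i, hA.eigenvalues i else 0

/-- Largest eigenvalue of a Hermitian matrix (junk value `0` otherwise). -/
noncomputable def lamMax {n : Type*} [Fintype n] [DecidableEq n] (A : Matrix n n ℂ) : ℝ :=
  if hA : A.IsHermitian then ⨆ i, hA.eigenvalues i else 0

/-- Operator norm: largest eigenvalue of `√(Xᴴ X)` (largest singular value). -/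
noncomputable def opNorm {n : Type*} [Fintype n] [DecidableEq n] (X : Matrix n n ℂ) : ℝ :=
  ⨆ i, (Matrix.posSemidef_conjTranspose_mul_self X).posSemidef_sqrt.1.eigenvalues i

/-!
Let `P = (ρ - σ)⁺`. Then `ρ ≤ σ + P`, `tr P = T` and `P ≤ T • 1 ≤ (T / β) • σ`. Operator
monotonicity of `log` gives `S(ρ‖σ) ≤ tr (σ + P) (log (σ + P) - log σ)`. Along the path
`σ + t P`, Klein's inequality bounds the derivative of `tr (σ + t P) (log (σ + t P) - log σ)` by
`T log (1 + t T / β) + T`, because `σ + t P ≤ (1 + t T / β) σ`; integrating over `t ∈ [0, 1]`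
(through Riemann sums) gives `(β + T) log (1 + T / β)`.
-/

open scoped MatrixOrder Matrix.Norms.L2Operator

theorem Real.sub_le_mul_log_sub_mul_log {x y : ℝ} (hx : 0 < x) (hy : 0 ≤ y) :
    y - x ≤ y * Real.log y - y * Real.log x := by
  rcases hy.eq_or_lt with rfl | hy
  · simpa using hx.le
  have h := mul_le_mul_of_nonneg_left (Real.log_le_sub_one_of_pos (div_pos hx hy)) hy.le
  rw [Real.log_div hx.ne' hy.ne', mul_sub, mul_sub, mul_div_cancel₀ _ hy.ne'] at h
  linarith

theorem Real.mul_sum_range_log_le {c : ℝ} (hc : 0 ≤ c) {m : ℕ} (hm : 0 < m) :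
    c / m * ∑ k ∈ Finset.range m, Real.log (1 + (k + 1) / m * c) ≤
      (1 + c) * Real.log (1 + c) - c + c / m * Real.log (1 + c) := by
  set h := c / m
  set a : ℕ → ℝ := fun k => 1 + k * h
  have ha : ∀ k, 0 < a k := fun k => by positivity
  have hsucc : ∀ k, a (k + 1) = a k + h := fun k => by simp only [a]; push_cast; ring
  -- `(a k + h) * log (a k)` is a discrete antiderivative of `h * log (a (k + 1)) + h`.
  have hstep : ∀ k, h * Real.log (a (k + 1)) ≤
      (a (k + 1) + h) * Real.log (a (k + 1)) - (a k + h) * Real.log (a k) - h := fun k => by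
    have := Real.sub_le_mul_log_sub_mul_log (ha k) (ha (k + 1)).le
    rw [hsucc] at this ⊢
    linarith
  have hsum := Finset.sum_le_sum fun k (_ : k ∈ Finset.range m) => hstep k
  rw [← Finset.mul_sum, Finset.sum_sub_distrib,
    Finset.sum_range_sub (fun k => (a k + h) * Real.log (a k))] at hsum
  have ham : a m = 1 + c := by simp only [a, h]; field_simp
  have hmh : ∑ _k ∈ Finset.range m, h = c := by
    simp only [Finset.sum_const, Finset.card_range, nsmul_eq_mul, h]; field_simp
  have hterm : ∀ k : ℕ, Real.log (1 + (k + 1) / m * c) = Real.log (a (k + 1)) := fun k => by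
    simp only [a, h]; push_cast; ring_nf
  simp only [hterm, ham, hmh, a, CharP.cast_eq_zero, zero_mul, add_zero, Real.log_one,
    mul_zero, sub_zero] at hsum ⊢
  linarith

theorem mlog_eq_log {n : Type*} [Fintype n] [DecidableEq n] (A : Matrix n n ℂ) :
    mlog A = CFC.log A := by
  unfold mlog CFC.log
  split_ifs with hA
  · exact (hA.cfc_eq _).symm
  · exact (cfc_apply_of_not_predicate A hA).symm

namespace Matrix

theorem re_trace_mono {n : Type*} [Fintype n] {A B : Matrix n n ℂ} (h : A ≤ B) :
    A.trace.re ≤ B.trace.re := by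
  have := (Complex.nonneg_iff.mp (le_iff.mp h).trace_nonneg).1
  rwa [trace_sub, Complex.sub_re, sub_nonneg] at this

variable {n : Type*} [Fintype n] [DecidableEq n]

theorem continuousOn_spectrum (f : ℝ → ℝ) (A : Matrix n n ℂ) : ContinuousOn f (spectrum ℝ A) :=
  A.finite_real_spectrum.continuousOn f

theorem PosSemidef.sqrt_eq_cfc {A : Matrix n n ℂ} (hA : A.PosSemidef) :
    hA.sqrt = cfc Real.sqrt A := by
  rw [hA.1.cfc_eq, IsHermitian.cfc, Unitary.conjStarAlgAut_apply, PosSemidef.sqrt]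
  rfl

theorem IsHermitian.cfc_eq_mul_diagonal {A : Matrix n n ℂ} (hA : A.IsHermitian) (f : ℝ → ℝ) :
    cfc f A = (hA.eigenvectorUnitary : Matrix n n ℂ) *
      diagonal (fun i => (f (hA.eigenvalues i) : ℂ)) *
        star (hA.eigenvectorUnitary : Matrix n n ℂ) := by
  rw [hA.cfc_eq, IsHermitian.cfc, Unitary.conjStarAlgAut_apply]
  rfl

theorem IsHermitian.trace_cfc {A : Matrix n n ℂ} (hA : A.IsHermitian) (f : ℝ → ℝ) :
    (cfc f A).trace = ∑ i, (f (hA.eigenvalues i) : ℂ) := by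
  rw [hA.cfc_eq_mul_diagonal, trace_mul_cycle, Unitary.coe_star_mul_self, one_mul,
    trace_diagonal]

theorem trace_conj_diagonal_mul_conj_diagonal (a b : n → ℝ) (U W : Matrix n n ℂ) :
    (U * diagonal (fun i => (a i : ℂ)) * star U *
        (W * diagonal (fun j => (b j : ℂ)) * star W)).trace =
      ∑ i, ∑ j, ((a i * b j * Complex.normSq ((star U * W) i j) : ℝ) : ℂ) := by
  have hcycle : U * diagonal (fun i => (a i : ℂ)) * star U *
        (W * diagonal (fun j => (b j : ℂ)) * star W) =
      U * (diagonal (fun i => (a i : ℂ)) * star U * W * diagonal (fun j => (b j : ℂ)) *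
        star W) := by
    simp only [mul_assoc]
  have hS : diagonal (fun i => (a i : ℂ)) * star U * W * diagonal (fun j => (b j : ℂ)) *
        star W * U =
      diagonal (fun i => (a i : ℂ)) * (star U * W) * diagonal (fun j => (b j : ℂ)) *
        (star U * W)ᴴ := by
    rw [conjTranspose_mul, ← star_eq_conjTranspose, ← star_eq_conjTranspose, star_star]
    simp only [mul_assoc]
  rw [hcycle, trace_mul_comm, hS]
  refine Finset.sum_congr rfl fun i _ => ?_
  simp only [diag, mul_apply (M := _ * _ * _), mul_diagonal, diagonal_mul, conjTranspose_apply]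
  refine Finset.sum_congr rfl fun j _ => ?_
  rw [Complex.ofReal_mul, Complex.ofReal_mul, Complex.normSq_eq_conj_mul_self, Complex.star_def]
  ring

/-- Through this formula every trace inequality below becomes a scalar inequality, weighted by the
nonnegative overlaps of the two eigenbases. -/
theorem IsHermitian.re_trace_cfc_mul_cfc {A B : Matrix n n ℂ} (hA : A.IsHermitian)
    (hB : B.IsHermitian) (f g : ℝ → ℝ) :
    (cfc f A * cfc g B).trace.re = ∑ i, ∑ j, f (hA.eigenvalues i) * g (hB.eigenvalues j) *
      Complex.normSq ((star (hA.eigenvectorUnitary : Matrix n n ℂ) *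
        hB.eigenvectorUnitary) i j) := by
  rw [hA.cfc_eq_mul_diagonal, hB.cfc_eq_mul_diagonal, trace_conj_diagonal_mul_conj_diagonal]
  simp only [Complex.re_sum, Complex.ofReal_re]

theorem re_trace_mul_nonneg {A B : Matrix n n ℂ} (hA : 0 ≤ A) (hB : 0 ≤ B) :
    0 ≤ (A * B).trace.re := by
  have hA' := nonneg_iff_posSemidef.mp hA
  have hB' := nonneg_iff_posSemidef.mp hB
  rw [← cfc_id' ℝ A, ← cfc_id' ℝ B, hA'.1.re_trace_cfc_mul_cfc hB'.1]
  exact Finset.sum_nonneg fun i _ => Finset.sum_nonneg fun j _ =>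
    mul_nonneg (mul_nonneg (hA'.eigenvalues_nonneg i) (hB'.eigenvalues_nonneg j))
      (Complex.normSq_nonneg _)

theorem re_trace_mul_le_mul_left {Z A B : Matrix n n ℂ} (hZ : 0 ≤ Z) (h : A ≤ B) :
    (Z * A).trace.re ≤ (Z * B).trace.re := by
  have := re_trace_mul_nonneg hZ (sub_nonneg.mpr h)
  rwa [mul_sub, trace_sub, Complex.sub_re, sub_nonneg] at this

theorem re_trace_mul_le_mul_right {Z A B : Matrix n n ℂ} (hZ : 0 ≤ Z) (h : A ≤ B) :
    (A * Z).trace.re ≤ (B * Z).trace.re := by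
  have := re_trace_mul_nonneg (sub_nonneg.mpr h) hZ
  rwa [sub_mul, trace_sub, Complex.sub_re, sub_nonneg] at this

/-- **Klein's inequality**. -/
theorem re_trace_mul_log_add_le {X Y : Matrix n n ℂ} (hX : X.PosDef) (hY : 0 ≤ Y) :
    (Y * CFC.log X).trace.re + Y.trace.re ≤ (Y * CFC.log Y).trace.re + X.trace.re := by
  have hY' := nonneg_iff_posSemidef.mp hY
  have expand : ∀ f g : ℝ → ℝ, (cfc f Y * cfc g X).trace.re = ∑ i, ∑ j,
      f (hY'.1.eigenvalues i) * g (hX.1.eigenvalues j) * Complex.normSq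
        ((star (hY'.1.eigenvectorUnitary : Matrix n n ℂ) * hX.1.eigenvectorUnitary) i j) :=
    hY'.1.re_trace_cfc_mul_cfc hX.1
  have hYlogX := expand (fun y => y) Real.log
  have htrY := expand (fun y => y) (fun _ => 1)
  have hYlogY := expand (fun y => y * Real.log y) (fun _ => 1)
  have htrX := expand (fun _ => 1) (fun x => x)
  rw [cfc_id' ℝ Y, ← CFC.log] at hYlogX
  rw [cfc_id' ℝ Y, cfc_const_one ℝ X, mul_one] at htrY
  rw [cfc_mul _ _ Y (continuousOn_spectrum _ Y) (continuousOn_spectrum _ Y), cfc_id' ℝ Y,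
    ← CFC.log, cfc_const_one ℝ X, mul_one] at hYlogY
  rw [cfc_const_one ℝ Y, cfc_id' ℝ X, one_mul] at htrX
  rw [hYlogX, htrY, hYlogY, htrX, ← Finset.sum_add_distrib, ← Finset.sum_add_distrib]
  refine Finset.sum_le_sum fun i _ => ?_
  rw [← Finset.sum_add_distrib, ← Finset.sum_add_distrib]
  refine Finset.sum_le_sum fun j _ => ?_
  have := Real.sub_le_mul_log_sub_mul_log (hX.eigenvalues_pos j) (hY'.eigenvalues_nonneg i)
  nlinarith [Complex.normSq_nonneg
    ((star (hY'.1.eigenvectorUnitary : Matrix n n ℂ) * hX.1.eigenvectorUnitary) i j)]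

theorem lamMin_smul_one_le [Nonempty n] {A : Matrix n n ℂ} (hA : A.IsHermitian) :
    lamMin A • (1 : Matrix n n ℂ) ≤ A := by
  rw [← Algebra.algebraMap_eq_smul_one, algebraMap_le_iff_le_spectrum hA.isSelfAdjoint,
    hA.spectrum_real_eq_range_eigenvalues, lamMin, dif_pos hA]
  rintro _ ⟨i, rfl⟩
  exact ciInf_le (Set.finite_range _).bddBelow i

theorem PosDef.lamMin_pos [Nonempty n] {A : Matrix n n ℂ} (hA : A.PosDef) : 0 < lamMin A := by
  obtain ⟨i, hi⟩ := exists_eq_ciInf_of_finite (f := hA.1.eigenvalues)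
  rw [lamMin, dif_pos hA.1, ← hi]
  exact hA.eigenvalues_pos i

theorem PosDef.exists_pos_smul_one_le {A : Matrix n n ℂ} (hA : A.PosDef) :
    ∃ b : ℝ, 0 < b ∧ b • (1 : Matrix n n ℂ) ≤ A := by
  cases isEmpty_or_nonempty n
  · exact ⟨1, one_pos, le_of_eq (Subsingleton.elim _ _)⟩
  · exact ⟨lamMin A, hA.lamMin_pos, lamMin_smul_one_le hA.1⟩

theorem le_re_trace_smul_one {A : Matrix n n ℂ} (hA : 0 ≤ A) :
    A ≤ A.trace.re • (1 : Matrix n n ℂ) := by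
  have hA' := nonneg_iff_posSemidef.mp hA
  rw [← Algebra.algebraMap_eq_smul_one, le_algebraMap_iff_spectrum_le hA'.1.isSelfAdjoint,
    hA'.1.spectrum_real_eq_range_eigenvalues, hA'.1.trace_eq_sum_eigenvalues]
  rintro _ ⟨i, rfl⟩
  simp only [Complex.re_sum]
  exact Finset.single_le_sum (fun j _ => hA'.eigenvalues_nonneg j) (Finset.mem_univ i)

theorem IsHermitian.traceNorm_eq {A : Matrix n n ℂ} (hA : A.IsHermitian) :
    traceNorm A = ∑ i, |hA.eigenvalues i| := by
  have hsq : Aᴴ * A = cfc (fun x : ℝ => x * x) A := by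
    rw [cfc_mul _ _ A (continuousOn_spectrum _ A) (continuousOn_spectrum _ A), cfc_id' ℝ A,
      hA.eq]
  rw [traceNorm, PosSemidef.sqrt_eq_cfc, hsq,
    ← cfc_comp' _ _ A Real.continuous_sqrt.continuousOn, hA.trace_cfc]
  simp only [Real.sqrt_mul_self_eq_abs, Complex.re_sum, Complex.ofReal_re]

theorem IsHermitian.re_trace_posPart {A : Matrix n n ℂ} (hA : A.IsHermitian) :
    (A⁺).trace.re = (traceNorm A + A.trace.re) / 2 := by
  rw [CFC.posPart_def, cfcₙ_eq_cfc, hA.trace_cfc, hA.traceNorm_eq, hA.trace_eq_sum_eigenvalues]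
  simp only [Complex.coe_algebraMap, Complex.re_sum, Complex.ofReal_re, ← Finset.sum_add_distrib,
    Finset.sum_div]
  refine Finset.sum_congr rfl fun i _ => ?_
  rcases le_total 0 (hA.eigenvalues i) with h | h
  · rw [posPart_eq_self.mpr h, abs_of_nonneg h]; ring
  · rw [posPart_eq_zero.mpr h, abs_of_nonpos h]; ring

theorem re_trace_mul_log_le_of_le_smul {Z B C : Matrix n n ℂ} (hZ : 0 ≤ Z) (hB : B.PosDef)
    (hC : C.PosDef) {γ : ℝ} (hγ : 0 < γ) (h : B ≤ γ • C) :
    (Z * CFC.log B).trace.re ≤ (Z * CFC.log C).trace.re + Real.log γ * Z.trace.re := by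
  have hlog : CFC.log B ≤ algebraMap ℝ _ (Real.log γ) + CFC.log C := by
    rw [← CFC.log_smul' C hγ (isStrictlyPositive_iff_posDef.mpr hC)]
    exact CFC.log_le_log h (isStrictlyPositive_iff_posDef.mpr hB)
  refine (re_trace_mul_le_mul_left hZ hlog).trans_eq ?_
  rw [Algebra.algebraMap_eq_smul_one, mul_add, mul_smul_comm, mul_one, trace_add, trace_smul,
    Complex.add_re, Complex.smul_re, smul_eq_mul, add_comm]

theorem re_trace_mul_log_le_of_le_add {A X : Matrix n n ℂ} (hA : 0 ≤ A) (hX : X.PosDef)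
    (h : A ≤ X) {ε : ℝ} (hε : 0 < ε) :
    (A * CFC.log A).trace.re ≤ (A * CFC.log X).trace.re + ε * A.trace.re := by
  obtain ⟨b, hb, hbX⟩ := hX.exists_pos_smul_one_le
  have hmul : ∀ f : ℝ → ℝ, A * cfc f A = cfc (fun x => x * f x) A := fun f => by
    rw [cfc_mul _ _ A (continuousOn_spectrum _ A) (continuousOn_spectrum _ A), cfc_id' ℝ A]
  -- `A` may be singular, so pass through the invertible `A + ε b`, which commutes with `A`.
  have hAε : (A + (ε * b) • 1).PosDef :=
    (PosDef.one.smul (mul_pos hε hb)).posSemidef_add (nonneg_iff_posSemidef.mp hA)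
  have hlogAε : CFC.log (A + (ε * b) • 1) = cfc (fun x => Real.log (x + ε * b)) A := by
    rw [CFC.log, ← Algebra.algebraMap_eq_smul_one, ← cfc_id' ℝ A,
      ← cfc_add_const _ _ _ (continuousOn_spectrum _ A), cfc_id' ℝ A,
      ← cfc_comp' _ _ A ((A.finite_real_spectrum.image _).continuousOn _)
        (continuousOn_spectrum _ A)]
  have hAεX : A + (ε * b) • 1 ≤ (1 + ε) • X := by
    rw [add_smul, one_smul, mul_smul]
    exact add_le_add h (smul_le_smul_of_nonneg_left hbX hε.le)
  calc (A * CFC.log A).trace.re = (cfc (fun x => x * Real.log x) A).trace.re := by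
        rw [CFC.log, hmul]
    _ ≤ (cfc (fun x => x * Real.log (x + ε * b)) A).trace.re := by
        refine re_trace_mono (cfc_mono (hf := continuousOn_spectrum _ A)
          (hg := continuousOn_spectrum _ A) fun x hx => ?_)
        rcases (spectrum_nonneg_of_nonneg hA hx).eq_or_lt with rfl | hx
        · simp
        · exact mul_le_mul_of_nonneg_left
            (Real.log_le_log hx (le_add_of_nonneg_right (by positivity))) hx.le
    _ = (A * CFC.log (A + (ε * b) • 1)).trace.re := by rw [hlogAε, hmul]
    _ ≤ (A * CFC.log X).trace.re + Real.log (1 + ε) * A.trace.re :=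
        re_trace_mul_log_le_of_le_smul hA hAε hX (by positivity) hAεX
    _ ≤ (A * CFC.log X).trace.re + ε * A.trace.re := by
        gcongr
        · simpa using re_trace_mono hA
        · linarith [Real.log_le_sub_one_of_pos (by positivity : 0 < 1 + ε)]

open Filter Topology in
theorem re_trace_mul_log_le_of_le {A X : Matrix n n ℂ} (hA : 0 ≤ A) (hX : X.PosDef) (h : A ≤ X) :
    (A * CFC.log A).trace.re ≤ (A * CFC.log X).trace.re := by
  have hlim : Tendsto (fun ε => (A * CFC.log X).trace.re + ε * A.trace.re) (𝓝[>] 0)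
      (𝓝 ((A * CFC.log X).trace.re)) := by
    have : Continuous fun ε : ℝ => (A * CFC.log X).trace.re + ε * A.trace.re := by fun_prop
    simpa using this.continuousWithinAt (s := Set.Ioi 0) (x := 0) |>.tendsto
  exact ge_of_tendsto hlim (eventually_nhdsWithin_of_forall fun ε hε =>
    re_trace_mul_log_le_of_le_add hA hX h hε)

theorem qRelEnt_le_of_le {ρ σ X : Matrix n n ℂ} (hρ : 0 ≤ ρ) (hσ : σ.PosDef) (hρX : ρ ≤ X)
    (hσX : σ ≤ X) : qRelEnt ρ σ ≤ (X * (CFC.log X - CFC.log σ)).trace.re := by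
  have hσ' := isStrictlyPositive_iff_posDef.mpr hσ
  have hX : X.PosDef := isStrictlyPositive_iff_posDef.mp (hσ'.of_le hσX)
  have hlog : 0 ≤ CFC.log X - CFC.log σ := sub_nonneg.mpr (CFC.log_le_log hσX hσ')
  calc qRelEnt ρ σ = (ρ * CFC.log ρ).trace.re - (ρ * CFC.log σ).trace.re := by
        rw [qRelEnt, mlog_eq_log, mlog_eq_log, mul_sub, trace_sub, Complex.sub_re]
    _ ≤ (ρ * CFC.log X).trace.re - (ρ * CFC.log σ).trace.re :=
        sub_le_sub_right (re_trace_mul_log_le_of_le hρ hX hρX) _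
    _ = (ρ * (CFC.log X - CFC.log σ)).trace.re := by rw [mul_sub, trace_sub, Complex.sub_re]
    _ ≤ (X * (CFC.log X - CFC.log σ)).trace.re := re_trace_mul_le_mul_right hlog hρX

theorem re_trace_mul_log_add_smul_sub_le {σ P : Matrix n n ℂ} (hσ : σ.PosDef) (hP : 0 ≤ P)
    {c : ℝ} (hc : 0 ≤ c) (hPσ : P ≤ c • σ) {s t : ℝ} (hs : 0 ≤ s) (hst : s ≤ t) :
    ((σ + t • P) * CFC.log (σ + t • P)).trace.re - ((σ + s • P) * CFC.log (σ + s • P)).trace.re ≤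
      (t - s) * ((P * CFC.log σ).trace.re + P.trace.re * (Real.log (1 + t * c) + 1)) := by
  have hpos : ∀ r : ℝ, 0 ≤ r → (σ + r • P).PosDef := fun r hr =>
    hσ.add_posSemidef (nonneg_iff_posSemidef.mp (smul_nonneg hr hP))
  have ht : 0 ≤ t := hs.trans hst
  have hle : σ + t • P ≤ (1 + t * c) • σ := by
    calc σ + t • P ≤ σ + t • (c • σ) := by gcongr
      _ = (1 + t * c) • σ := by rw [smul_smul, add_smul, one_smul]
  have hklein := re_trace_mul_log_add_le (hpos t ht) (hpos s hs).posSemidef.nonneg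
  have hlog := mul_le_mul_of_nonneg_left
    (re_trace_mul_log_le_of_le_smul hP (hpos t ht) hσ (by positivity) hle) (sub_nonneg.mpr hst)
  have hdiff : σ + t • P - (σ + s • P) = (t - s) • P := by
    rw [add_sub_add_left_eq_sub, sub_smul]
  have hgrad : ((σ + t • P) * CFC.log (σ + t • P)).trace.re -
      ((σ + s • P) * CFC.log (σ + s • P)).trace.re ≤
        ((σ + t • P - (σ + s • P)) * CFC.log (σ + t • P)).trace.re +
          (σ + t • P - (σ + s • P)).trace.re := by
    simp only [sub_mul, trace_sub, Complex.sub_re]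
    linarith
  rw [hdiff, smul_mul_assoc, trace_smul, trace_smul, Complex.smul_re, Complex.smul_re,
    smul_eq_mul, smul_eq_mul] at hgrad
  linarith

theorem re_trace_mul_log_add_sub_le_sum {σ P : Matrix n n ℂ} (hσ : σ.PosDef) (hP : 0 ≤ P)
    {c : ℝ} (hc : 0 ≤ c) (hPσ : P ≤ c • σ) {m : ℕ} (hm : 0 < m) :
    ((σ + P) * CFC.log (σ + P)).trace.re - (σ * CFC.log σ).trace.re ≤
      (P * CFC.log σ).trace.re + P.trace.re +
        P.trace.re / m * ∑ k ∈ Finset.range m, Real.log (1 + (k + 1) / m * c) := by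
  obtain ⟨φ, hφ⟩ : ∃ φ : ℝ → ℝ, ∀ t, φ t = ((σ + t • P) * CFC.log (σ + t • P)).trace.re :=
    ⟨_, fun _ => rfl⟩
  have hm' : (0 : ℝ) < m := by positivity
  have hstep : ∀ k : ℕ, φ ((k + 1 : ℕ) / m) - φ (k / m) ≤ ((P * CFC.log σ).trace.re +
      P.trace.re * (Real.log (1 + (k + 1) / m * c) + 1)) / m := fun k => by
    have := re_trace_mul_log_add_smul_sub_le hσ hP hc hPσ (s := k / m) (t := (k + 1) / m)
      (by positivity) (by gcongr; linarith)
    rw [← hφ, ← hφ, ← sub_div, add_sub_cancel_left, one_div_mul_eq_div] at this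
    exact_mod_cast this
  have htel := Finset.sum_range_sub (fun k : ℕ => φ (k / m)) m
  rw [div_self hm'.ne', Nat.cast_zero, zero_div, hφ, hφ, one_smul, zero_smul, add_zero] at htel
  rw [← htel]
  refine (Finset.sum_le_sum fun k _ => hstep k).trans_eq ?_
  rw [← Finset.sum_div, Finset.sum_add_distrib, Finset.sum_const, Finset.card_range,
    nsmul_eq_mul, ← Finset.mul_sum, Finset.sum_add_distrib, Finset.sum_const,
    Finset.card_range, nsmul_eq_mul, mul_one]
  generalize ∑ k ∈ Finset.range m, Real.log (1 + (k + 1) / m * c) = S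
  field_simp
  ring

theorem re_trace_add_mul_log_sub_log_le_add {σ P : Matrix n n ℂ} (hσ : σ.PosDef) (hP : 0 ≤ P)
    {c : ℝ} (hc : 0 < c) (hPσ : P ≤ c • σ) {m : ℕ} (hm : 0 < m) :
    ((σ + P) * (CFC.log (σ + P) - CFC.log σ)).trace.re ≤
      P.trace.re / c * ((1 + c) * Real.log (1 + c)) + P.trace.re / m * Real.log (1 + c) := by
  have hT : 0 ≤ P.trace.re := by simpa using re_trace_mono hP
  have hsum : P.trace.re / m * ∑ k ∈ Finset.range m, Real.log (1 + (k + 1) / m * c) ≤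
      P.trace.re / c * ((1 + c) * Real.log (1 + c)) - P.trace.re +
        P.trace.re / m * Real.log (1 + c) :=
    calc _ = P.trace.re / c * (c / m * ∑ k ∈ Finset.range m, Real.log (1 + (k + 1) / m * c)) := by
          rw [← mul_assoc, div_mul_div_cancel₀ hc.ne']
      _ ≤ P.trace.re / c * ((1 + c) * Real.log (1 + c) - c + c / m * Real.log (1 + c)) := by
          gcongr
          exact Real.mul_sum_range_log_le hc.le hm
      _ = P.trace.re / c * ((1 + c) * Real.log (1 + c)) - P.trace.re +
            P.trace.re / m * Real.log (1 + c) := by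
          field_simp
  have htel := re_trace_mul_log_add_sub_le_sum hσ hP hc.le hPσ hm
  rw [mul_sub, add_mul σ P (CFC.log σ), trace_sub, trace_add, Complex.sub_re, Complex.add_re]
  linarith

open Filter in
theorem re_trace_add_mul_log_sub_log_le {σ P : Matrix n n ℂ} (hσ : σ.PosDef) (hP : 0 ≤ P)
    {c : ℝ} (hc : 0 < c) (hPσ : P ≤ c • σ) :
    ((σ + P) * (CFC.log (σ + P) - CFC.log σ)).trace.re ≤
      P.trace.re / c * ((1 + c) * Real.log (1 + c)) := by
  have hlim : Tendsto (fun m : ℕ => P.trace.re / c * ((1 + c) * Real.log (1 + c)) +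
      P.trace.re / m * Real.log (1 + c)) atTop
        (nhds (P.trace.re / c * ((1 + c) * Real.log (1 + c)))) := by
    simpa using tendsto_const_nhds.add
      ((tendsto_const_div_atTop_nhds_zero_nat P.trace.re).mul_const (Real.log (1 + c)))
  exact ge_of_tendsto hlim (eventually_atTop.mpr
    ⟨1, fun m hm => re_trace_add_mul_log_sub_log_le_add hσ hP hc hPσ hm⟩)

end Matrix

theorem relEntropy_le_of_beta_le_T_general {d : ℕ} (ρ σ : Matrix (Fin d) (Fin d) ℂ)
    (hρ : ρ.PosSemidef) (hρ1 : ρ.trace = 1)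
    (hσ : σ.PosDef) (hσ1 : σ.trace = 1)
    (β T : ℝ) (hβ : β = lamMin σ)
    (hT : T = traceNorm (ρ - σ) / 2) (hTβ : β ≤ T) :
    qRelEnt ρ σ ≤ (β + T) * Real.log (1 + T / β) := by
  have : Nonempty (Fin d) := by
    rcases d with _ | d
    · simp [trace] at hσ1
    · exact ⟨0⟩
  have hβpos : 0 < β := hβ ▸ hσ.lamMin_pos
  have hβσ : β • (1 : Matrix (Fin d) (Fin d) ℂ) ≤ σ := hβ ▸ lamMin_smul_one_le hσ.1
  have hTpos : 0 < T := hβpos.trans_le hTβ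
  have hc : 0 < T / β := div_pos hTpos hβpos
  set P := (ρ - σ)⁺
  have hP : 0 ≤ P := CFC.posPart_nonneg _
  have hρP : ρ ≤ σ + P := sub_le_iff_le_add'.mp (CFC.le_posPart (hρ.1.sub hσ.1).isSelfAdjoint)
  have hTP : P.trace.re = T := by
    rw [(hρ.1.sub hσ.1).re_trace_posPart, trace_sub, hρ1, hσ1, sub_self, Complex.zero_re,
      add_zero, hT]
  have hPσ : P ≤ (T / β) • σ :=
    calc P ≤ T • (1 : Matrix (Fin d) (Fin d) ℂ) := hTP ▸ le_re_trace_smul_one hP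
      _ = (T / β) • β • (1 : Matrix (Fin d) (Fin d) ℂ) := by
          rw [smul_smul, div_mul_cancel₀ _ hβpos.ne']
      _ ≤ (T / β) • σ := smul_le_smul_of_nonneg_left hβσ hc.le
  calc qRelEnt ρ σ ≤ ((σ + P) * (CFC.log (σ + P) - CFC.log σ)).trace.re :=
        qRelEnt_le_of_le (nonneg_iff_posSemidef.mpr hρ) hσ hρP (le_add_of_nonneg_right hP)
    _ ≤ P.trace.re / (T / β) * ((1 + T / β) * Real.log (1 + T / β)) :=
        re_trace_add_mul_log_sub_log_le hσ hP hc hPσ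
    _ = (β + T) * Real.log (1 + T / β) := by
        rw [hTP]
        field_simp [hTpos.ne']

/-- Upper bound on the relative entropy when `T ≥ β`. -/
theorem relEntropy_le_of_beta_le_T {d : ℕ} (ρ σ : Matrix (Fin d) (Fin d) ℂ)
    (hρ : ρ.PosSemidef) (hρ1 : ρ.trace = 1)
    (hσ : σ.PosDef) (hσ1 : σ.trace = 1)
    (hsupp : LinearMap.range ρ.mulVecLin ≤ LinearMap.range σ.mulVecLin)
    (β T : ℝ) (hβ : β = lamMin σ)
    (hT : T = traceNorm (ρ - σ) / 2) (hTβ : β ≤ T) :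
    qRelEnt ρ σ ≤ (β + T) * Real.log (1 + T / β) :=
  relEntropy_le_of_beta_le_T_general ρ σ hρ hρ1 hσ hσ1 β T hβ hT hTβ
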